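/- Let (a_k)_{k≥1} be a sequence of nonnegative real numbers such that ∑_{k=1}^∞ a_k / λ₀^k < ∞ for some λ₀ > 0. Define N((a_k)) = (1/2) · inf { λ > 0 : ∑_{k=1}^∞ a_k / λ^k ≤ 1 }. Then N satisfies the triangle inequality: N((a_k + b_k)) ≤ N((a_k)) + N((b_k)) for any two such sequences (a_k), (b_k). -/

import Mathlib

/-!
Since every term of the series has degree at least one in `1/λ`, enlarging `λ` to `Λ ≥ λ`
shrinks the series at least by the factor `λ/Λ`. Hence if `x` is admissible for `a` and `y` for
`b`, then at `x + y` the series of `a` is at most `x/(x+y)` and that of `b` at most `y/(x+y)`, so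
`x + y` is admissible for `a + b`. Taking infima gives the triangle inequality.
-/

/-- The defining set of the Gross–Pitaevskii quasi-norm of a sequence `(a_k)_{k ≥ 1}`
(indexed here by `a (k+1)`, `k : ℕ`): the set of `λ > 0` with `∑_{k≥1} a_k / λ^k ≤ 1`. -/
def gpSet (a : ℕ → ℝ) : Set ℝ :=
  {l : ℝ | 0 < l ∧ Summable (fun k : ℕ => a (k + 1) / l ^ (k + 1)) ∧
    ∑' k : ℕ, a (k + 1) / l ^ (k + 1) ≤ 1}

/-- The Gross–Pitaevskii quasi-norm `N((a_k)) = (1/2)·inf { λ > 0 : ∑_{k≥1} a_k/λ^k ≤ 1 }`. -/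
noncomputable def gpNorm (a : ℕ → ℝ) : ℝ := (1 / 2) * sInf (gpSet a)

open scoped Pointwise

theorem div_pow_succ_le_mul_div_pow_succ {c l L : ℝ} (hc : 0 ≤ c) (hl : 0 < l) (hlL : l ≤ L)
    (k : ℕ) : c / L ^ (k + 1) ≤ l / L * (c / l ^ (k + 1)) := by
  have hL : 0 < L := hl.trans_le hlL
  calc c / L ^ (k + 1) = (l / L) ^ (k + 1) * (c / l ^ (k + 1)) := by
        rw [div_pow]; field_simp
    _ ≤ l / L * (c / l ^ (k + 1)) := by
        gcongr
        exact pow_le_of_le_one (by positivity) ((div_le_one hL).2 hlL) k.succ_ne_zero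

section Scaling

variable {a : ℕ → ℝ} {l L : ℝ}

theorem Summable.div_pow_succ_of_le (ha : ∀ k, 0 ≤ a k) (hl : 0 < l) (hlL : l ≤ L)
    (hs : Summable fun k : ℕ => a (k + 1) / l ^ (k + 1)) :
    Summable fun k : ℕ => a (k + 1) / L ^ (k + 1) :=
  (hs.mul_left (l / L)).of_nonneg_of_le
    (fun _ => div_nonneg (ha _) (by positivity [hl.trans_le hlL]))
    (fun k => div_pow_succ_le_mul_div_pow_succ (ha _) hl hlL k)

theorem tsum_div_pow_succ_le_of_le (ha : ∀ k, 0 ≤ a k) (hl : 0 < l) (hlL : l ≤ L)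
    (hs : Summable fun k : ℕ => a (k + 1) / l ^ (k + 1)) :
    ∑' k : ℕ, a (k + 1) / L ^ (k + 1) ≤ l / L * ∑' k : ℕ, a (k + 1) / l ^ (k + 1) := by
  rw [← tsum_mul_left]
  exact (hs.div_pow_succ_of_le ha hl hlL).tsum_le_tsum
    (fun k => div_pow_succ_le_mul_div_pow_succ (ha _) hl hlL k) (hs.mul_left _)

end Scaling

section GpSet

variable {a b : ℕ → ℝ}

theorem gpSet_nonempty (ha : ∀ k, 0 ≤ a k) {l : ℝ} (hl : 0 < l)
    (hs : Summable fun k : ℕ => a (k + 1) / l ^ (k + 1)) : (gpSet a).Nonempty := by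
  set S := ∑' k : ℕ, a (k + 1) / l ^ (k + 1)
  have hS : 0 ≤ S := tsum_nonneg fun k => div_nonneg (ha _) (by positivity)
  have hlL : l ≤ l * (S + 1) := by nlinarith
  refine ⟨l * (S + 1), by positivity, hs.div_pow_succ_of_le ha hl hlL, ?_⟩
  calc ∑' k : ℕ, a (k + 1) / (l * (S + 1)) ^ (k + 1) ≤ l / (l * (S + 1)) * S :=
        tsum_div_pow_succ_le_of_le ha hl hlL hs
    _ = S / (S + 1) := by field_simp
    _ ≤ 1 := (div_le_one (by positivity)).2 (by linarith)

theorem tsum_div_pow_succ_add_le (ha : ∀ k, 0 ≤ a k) {x y : ℝ} (hy : 0 ≤ y)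
    (hx : x ∈ gpSet a) : ∑' k : ℕ, a (k + 1) / (x + y) ^ (k + 1) ≤ x / (x + y) := by
  obtain ⟨hx0, hxs, hx1⟩ := hx
  calc ∑' k : ℕ, a (k + 1) / (x + y) ^ (k + 1)
        ≤ x / (x + y) * ∑' k : ℕ, a (k + 1) / x ^ (k + 1) :=
        tsum_div_pow_succ_le_of_le ha hx0 (le_add_of_nonneg_right hy) hxs
    _ ≤ x / (x + y) := mul_le_of_le_one_right (by positivity) hx1

theorem add_mem_gpSet (ha : ∀ k, 0 ≤ a k) (hb : ∀ k, 0 ≤ b k) {x y : ℝ}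
    (hx : x ∈ gpSet a) (hy : y ∈ gpSet b) : x + y ∈ gpSet (a + b) := by
  have hx0 := hx.1
  have hy0 := hy.1
  have hsa := hx.2.1.div_pow_succ_of_le ha hx0 (le_add_of_nonneg_right hy0.le)
  have hsb := hy.2.1.div_pow_succ_of_le hb hy0 (le_add_of_nonneg_left hx0.le)
  have hsplit : (fun k : ℕ => (a + b) (k + 1) / (x + y) ^ (k + 1)) =
      fun k => a (k + 1) / (x + y) ^ (k + 1) + b (k + 1) / (x + y) ^ (k + 1) := by
    ext k; rw [Pi.add_apply, add_div]
  refine ⟨by positivity, hsplit ▸ hsa.add hsb, ?_⟩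
  rw [hsplit, hsa.tsum_add hsb]
  calc _ ≤ x / (x + y) + y / (x + y) :=
        add_le_add (tsum_div_pow_succ_add_le ha hy0.le hx)
          (add_comm y x ▸ tsum_div_pow_succ_add_le hb hx0.le hy)
    _ = 1 := by field_simp

theorem sInf_gpSet_add_le (ha : ∀ k, 0 ≤ a k) (hb : ∀ k, 0 ≤ b k)
    (hna : (gpSet a).Nonempty) (hnb : (gpSet b).Nonempty) :
    sInf (gpSet (a + b)) ≤ sInf (gpSet a) + sInf (gpSet b) := by
  have hbdd : ∀ c, BddBelow (gpSet c) := fun c => ⟨0, fun _ hz => hz.1.le⟩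
  rw [← csInf_add hna (hbdd a) hnb (hbdd b)]
  refine csInf_le_csInf (hbdd _) (hna.add hnb) ?_
  rintro _ ⟨x, hx, y, hy, rfl⟩
  exact add_mem_gpSet ha hb hx hy

end GpSet

/-- For nonnegative sequences with `∑_k a_k/λ₀^k < ∞` for some `λ₀ > 0`,
the quantity `N` satisfies the triangle inequality `N(a + b) ≤ N(a) + N(b)`. -/
theorem stmt3 (a b : ℕ → ℝ) (ha : ∀ k, 0 ≤ a k) (hb : ∀ k, 0 ≤ b k)
    (hsa : ∃ l : ℝ, 0 < l ∧ Summable (fun k : ℕ => a (k + 1) / l ^ (k + 1)))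
    (hsb : ∃ l : ℝ, 0 < l ∧ Summable (fun k : ℕ => b (k + 1) / l ^ (k + 1))) :
    gpNorm (fun k => a k + b k) ≤ gpNorm a + gpNorm b := by
  obtain ⟨la, hla, hsa⟩ := hsa
  obtain ⟨lb, hlb, hsb⟩ := hsb
  rw [gpNorm, gpNorm, gpNorm, ← mul_add]
  exact mul_le_mul_of_nonneg_left
    (sInf_gpSet_add_le ha hb (gpSet_nonempty ha hla hsa) (gpSet_nonempty hb hlb hsb))
    (by norm_num)
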